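/- For every integer n ≥ 1 and real numbers ρ > 0 and γ ≥ 0, one has Σ_{m=0}^∞ γ^m · Σ_{k=0}^{n-1} 1/(k+ρ)_{m+1} = Σ_{k=0}^{n-1} 1/(k+ρ) + Σ_{m=1}^∞ (γ^m / m) · ( 1/(ρ)_m − 1/(n+ρ)_m ), and both series converge. -/

import Mathlib

open scoped BigOperators Nat

/-- The real Pochhammer symbol `(a)_m = a (a+1) ⋯ (a+m-1)`. -/
noncomputable def pochR (a : ℝ) (m : ℕ) : ℝ := (ascPochhammer ℝ m).eval a

/-!
Telescoping `1/(a)_m - 1/(a+1)_m = m/(a)_{m+1}` over `a = ρ, ρ+1, …, ρ+n-1` turns the inner sum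
of the `(m+1)`-st term into `(1/(ρ)_{m+1} - 1/(n+ρ)_{m+1})/(m+1)`, so the identity is just the
splitting off of the `m = 0` term. Convergence comes from `(a)_{m+1} ≥ a·m!`, which dominates
the series by an exponential series.
-/

lemma pochR_zero (a : ℝ) : pochR a 0 = 1 := by simp [pochR]

lemma pochR_one (a : ℝ) : pochR a 1 = a := by simp [pochR]

lemma pochR_succ (a : ℝ) (m : ℕ) : pochR a (m + 1) = pochR a m * (a + m) :=
  ascPochhammer_succ_eval m a

lemma pochR_succ_left (a : ℝ) (m : ℕ) : pochR a (m + 1) = a * pochR (a + 1) m := by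
  simp [pochR, ascPochhammer_succ_left, Polynomial.eval_comp]

lemma pochR_pos {a : ℝ} (ha : 0 < a) (m : ℕ) : 0 < pochR a m := by
  induction m with
  | zero => simp [pochR_zero]
  | succ m ih => rw [pochR_succ]; positivity

lemma mul_factorial_le_pochR_succ {a : ℝ} (ha : 0 < a) (m : ℕ) : a * m ! ≤ pochR a (m + 1) := by
  induction m with
  | zero => simp [pochR_one]
  | succ m ih =>
    calc a * (m + 1)! = a * m ! * (m + 1) := by push_cast [Nat.factorial_succ]; ring
      _ ≤ pochR a (m + 1) * (a + (m + 1 : ℕ)) :=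
        mul_le_mul ih (by push_cast; linarith) (by positivity) (pochR_pos ha _).le
      _ = pochR a (m + 2) := (pochR_succ a (m + 1)).symm

lemma summable_pow_div_pochR_succ {a : ℝ} (ha : 0 < a) (γ : ℝ) :
    Summable fun m : ℕ => γ ^ m / pochR a (m + 1) := by
  refine .of_norm_bounded ((Real.summable_pow_div_factorial |γ|).div_const a) fun m => ?_
  rw [norm_div, Real.norm_eq_abs, Real.norm_eq_abs, abs_pow, abs_of_pos (pochR_pos ha _),
    div_div, mul_comm]
  gcongr
  exact mul_factorial_le_pochR_succ ha m

lemma one_div_pochR_sub_one_div_pochR_add_one {a : ℝ} {m : ℕ} (h : pochR a (m + 1) ≠ 0) :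
    1 / pochR a m - 1 / pochR (a + 1) m = m / pochR a (m + 1) := by
  have hright := pochR_succ a m
  have hleft := pochR_succ_left a m
  have h₁ : pochR a m ≠ 0 := fun h0 => h (by rw [hright, h0, zero_mul])
  have h₂ : pochR (a + 1) m ≠ 0 := fun h0 => h (by rw [hleft, h0, mul_zero])
  have ha : a ≠ 0 := fun h0 => h (by rw [hleft, h0, zero_mul])
  rw [div_sub_div _ _ h₁ h₂, div_eq_div_iff (mul_ne_zero h₁ h₂) h]
  linear_combination pochR (a + 1) m * hright - pochR a m * hleft

lemma mul_sum_one_div_pochR_succ (a : ℝ) (n m : ℕ)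
    (h : ∀ k < n, pochR ((k : ℝ) + a) (m + 1) ≠ 0) :
    (m : ℝ) * ∑ k ∈ Finset.range n, 1 / pochR ((k : ℝ) + a) (m + 1) =
      1 / pochR a m - 1 / pochR ((n : ℝ) + a) m := by
  have hstep : ∀ k ∈ Finset.range n, (m : ℝ) * (1 / pochR ((k : ℝ) + a) (m + 1)) =
      1 / pochR ((k : ℝ) + a) m - 1 / pochR (((k + 1 : ℕ) : ℝ) + a) m := by
    intro k hk
    rw [Nat.cast_succ, add_right_comm, one_div_pochR_sub_one_div_pochR_add_one
      (h k (Finset.mem_range.mp hk)), mul_one_div]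
  rw [Finset.mul_sum, Finset.sum_congr rfl hstep,
    Finset.sum_range_sub' (fun k : ℕ => 1 / pochR ((k : ℝ) + a) m), Nat.cast_zero, zero_add]

theorem pangenome_series_rearrangement_general
    (n : ℕ) (ρ γ : ℝ) (hρ : 0 < ρ) :
    Summable (fun m : ℕ =>
      γ ^ m * ∑ k ∈ Finset.range n, 1 / pochR ((k : ℝ) + ρ) (m + 1)) ∧
    Summable (fun m : ℕ =>
      γ ^ (m + 1) / (m + 1) *
        (1 / pochR ρ (m + 1) - 1 / pochR ((n : ℝ) + ρ) (m + 1))) ∧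
    ∑' m : ℕ, γ ^ m * ∑ k ∈ Finset.range n, 1 / pochR ((k : ℝ) + ρ) (m + 1) =
      ∑ k ∈ Finset.range n, 1 / ((k : ℝ) + ρ) +
        ∑' m : ℕ,
          γ ^ (m + 1) / (m + 1) *
            (1 / pochR ρ (m + 1) - 1 / pochR ((n : ℝ) + ρ) (m + 1)) := by
  set f : ℕ → ℝ := fun m => γ ^ m * ∑ k ∈ Finset.range n, 1 / pochR ((k : ℝ) + ρ) (m + 1)
  have hf : Summable f := by
    simp only [f, Finset.mul_sum, mul_one_div]
    exact summable_sum fun k _ => summable_pow_div_pochR_succ (by positivity) γ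
  have hf_zero : f 0 = ∑ k ∈ Finset.range n, 1 / ((k : ℝ) + ρ) := by simp [f, pochR_one]
  have hf_succ (m : ℕ) : f (m + 1) =
      γ ^ (m + 1) / (m + 1) * (1 / pochR ρ (m + 1) - 1 / pochR ((n : ℝ) + ρ) (m + 1)) := by
    have hm : ((m : ℝ) + 1) ≠ 0 := by positivity
    have htel := mul_sum_one_div_pochR_succ ρ n (m + 1)
      fun k _ => (pochR_pos (by positivity) _).ne'
    push_cast at htel
    simp only [f]
    rw [← htel]
    field_simp
  refine ⟨hf, ((summable_nat_add_iff 1).mpr hf).congr hf_succ, ?_⟩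
  rw [hf.tsum_eq_zero_add, hf_zero, tsum_congr hf_succ]

/-- Series rearrangement from the proof of Corollary 2: for `n ≥ 1`, `ρ > 0`, `γ ≥ 0`,
`Σ_{m=0}^∞ γ^m Σ_{k=0}^{n-1} 1/(k+ρ)_{m+1}
  = Σ_{k=0}^{n-1} 1/(k+ρ) + Σ_{m=1}^∞ (γ^m/m)(1/(ρ)_m − 1/(n+ρ)_m)`,
and both series converge. -/
theorem pangenome_series_rearrangement
    (n : ℕ) (hn : 1 ≤ n) (ρ γ : ℝ) (hρ : 0 < ρ) (hγ : 0 ≤ γ) :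
    Summable (fun m : ℕ =>
      γ ^ m * ∑ k ∈ Finset.range n, 1 / pochR ((k : ℝ) + ρ) (m + 1)) ∧
    Summable (fun m : ℕ =>
      γ ^ (m + 1) / (m + 1) *
        (1 / pochR ρ (m + 1) - 1 / pochR ((n : ℝ) + ρ) (m + 1))) ∧
    ∑' m : ℕ, γ ^ m * ∑ k ∈ Finset.range n, 1 / pochR ((k : ℝ) + ρ) (m + 1) =
      ∑ k ∈ Finset.range n, 1 / ((k : ℝ) + ρ) +
        ∑' m : ℕ,
          γ ^ (m + 1) / (m + 1) *
            (1 / pochR ρ (m + 1) - 1 / pochR ((n : ℝ) + ρ) (m + 1)) :=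
  pangenome_series_rearrangement_general n ρ γ hρ
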